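/- arXiv:1904.00173 — 2 statements merged into one kernel-verified Lean document; each statement's English description precedes it below -/
import Mathlib

section
/- (Uniform testing, necessity.) Let H_0, H_1 be measurable subsets of the set E of stationary ergodic process distributions over a finite alphabet A. If there exists a uniformly consistent test for H_0 against H_1, then W_ρ(H_{1−i}) = 0 for every ρ ∈ cl(H_i) and each i ∈ {0,1}. -/
open MeasureTheory Filter Topology

namespace Paper

variable {A : Type*} [Fintype A] [MeasurableSpace A]

/-- The left shift on one-sided infinite sequences. -/
def shift (x : ℕ → A) : ℕ → A := fun n => x (n + 1)

/-- A process distribution is stationary if it is invariant under the left shift. -/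
def Stationary (ρ : Measure (ℕ → A)) : Prop := Measure.map shift ρ = ρ

/-- The cylinder set of sequences starting with the word `B ∈ A^k`. -/
def wordCyl {k : ℕ} (B : Fin k → A) : Set (ℕ → A) := {x | ∀ i : Fin k, x i = B i}

open Classical in
/-- Empirical frequency `ν(X_{1..n}, B)` of the word `B ∈ A^k` in the first `n` symbols
of `x` (0 when `n < k`). -/
noncomputable def freqWord {k : ℕ} (B : Fin k → A) (n : ℕ) (x : ℕ → A) : ℝ :=
  if k ≤ n then
    (∑ i ∈ Finset.range (n - k + 1), if (∀ j : Fin k, x (i + j) = B j) then (1 : ℝ) else 0) /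
      ((n : ℝ) - k + 1)
  else 0

/-- Ergodicity: the empirical frequency of every finite word converges a.s. to a constant. -/
def ErgodicProc (ρ : Measure (ℕ → A)) : Prop :=
  ∀ (k : ℕ) (B : Fin k → A),
    ∃ c : ℝ, ∀ᵐ x ∂ρ, Tendsto (fun n => freqWord B n x) atTop (𝓝 c)

/-- A stationary ergodic process distribution. -/
def StatErg (ρ : Measure (ℕ → A)) : Prop :=
  IsProbabilityMeasure ρ ∧ Stationary ρ ∧ ErgodicProc ρ

/-- The set `E` of stationary ergodic process distributions over the alphabet `A`. -/
def ergSet (A : Type*) [Fintype A] [MeasurableSpace A] : Set (Measure (ℕ → A)) :=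
  {ρ | StatErg ρ}

/-- Weights `w_k = 1/(k(k+1))` (indexing from 0: `w_k = 1/((k+1)(k+2))`). -/
noncomputable def wt (k : ℕ) : ℝ := 1 / ((k + 1) * (k + 2))

/-- The distributional distance `d(ρ₁,ρ₂) = Σ_k w_k Σ_{B ∈ A^k} |ρ₁(B) − ρ₂(B)|`. -/
noncomputable def dd (ρ₁ ρ₂ : Measure (ℕ → A)) : ℝ :=
  ∑' k : ℕ, wt k * ∑ B : Fin (k + 1) → A,
    |(ρ₁ (wordCyl B)).toReal - (ρ₂ (wordCyl B)).toReal|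

/-- The empirical distributional distance `d̂(X_{1..n}, ρ)`. -/
noncomputable def hatd (n : ℕ) (x : ℕ → A) (ρ : Measure (ℕ → A)) : ℝ :=
  ∑' k : ℕ, wt k * ∑ B : Fin (k + 1) → A,
    |freqWord B n x - (ρ (wordCyl B)).toReal|

/-- The empirical distributional distance from a sample to a hypothesis (set of
process distributions): `d̂(X_{1..n}, H) = inf_{ρ ∈ H} d̂(X_{1..n}, ρ)`. -/
noncomputable def hatdSet (n : ℕ) (x : ℕ → A) (H : Set (Measure (ℕ → A))) : ℝ :=
  ⨅ ρ : H, hatd n x (ρ : Measure (ℕ → A))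

/-- Closure of a set of (stationary) process distributions in the topology of the
distributional distance, taken within the space `S` of stationary process distributions. -/
def closureD (H : Set (Measure (ℕ → A))) : Set (Measure (ℕ → A)) :=
  {ρ | IsProbabilityMeasure ρ ∧ Stationary ρ ∧ ∀ ε : ℝ, 0 < ε → ∃ μ ∈ H, dd ρ μ < ε}

/-- `W` is the ergodic decomposition of the stationary process distribution `ρ`:
a Borel probability measure on the space of process distributions concentrated on the
stationary ergodic ones, with `ρ(s) = ∫ μ(s) dW(μ)` for every measurable `s`. -/
def IsErgodicDecomp (ρ : Measure (ℕ → A)) (W : Measure (Measure (ℕ → A))) : Prop :=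
  IsProbabilityMeasure W ∧ W (ergSet A) = 1 ∧
    ∀ s : Set (ℕ → A), MeasurableSet s → ρ s = ∫⁻ μ, μ s ∂W

/-- A test depends, at sample size `n`, only on the first `n` symbols. -/
def FinHorizon (φ : ℕ → (ℕ → A) → Bool) : Prop :=
  ∀ n x y, (∀ i < n, x i = y i) → φ n x = φ n y

/-- Uniform consistency of a test (`false` = accept `H₀`, `true` = accept `H₁`):
for every `α > 0`, for all large enough sample sizes, both probabilities of error are
less than `α`. -/
def UnifConsistent (φ : ℕ → (ℕ → A) → Bool) (H₀ H₁ : Set (Measure (ℕ → A))) : Prop :=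
  ∀ α : ℝ, 0 < α → ∃ N : ℕ, ∀ n ≥ N,
    (∀ ρ ∈ H₀, ρ {x | φ n x = true} < ENNReal.ofReal α) ∧
    (∀ ρ ∈ H₁, ρ {x | φ n x = false} < ENNReal.ofReal α)

/-- Asymmetric (`α`-level) consistency of a family of tests `ψ α`: Type I error is always
at most `α`, and under every distribution in `H₁`, a.s. the test outputs `1` from some
sample size on. -/
def AsymConsistent (ψ : ℝ → ℕ → (ℕ → A) → Bool) (H₀ H₁ : Set (Measure (ℕ → A))) : Prop :=
  (∀ α : ℝ, α ∈ Set.Ioo (0 : ℝ) 1 → ∀ n : ℕ, ∀ ρ ∈ H₀,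
    ρ {x | ψ α n x = true} ≤ ENNReal.ofReal α) ∧
  (∀ α : ℝ, α ∈ Set.Ioo (0 : ℝ) 1 → ∀ ρ ∈ H₁,
    ∀ᵐ x ∂ρ, ∀ᶠ n in atTop, ψ α n x = true)

/-! ### Auxiliary material -/

section Aux
set_option linter.unusedSectionVars false

lemma measurable_shift : Measurable (shift (A := A)) := by
  apply measurable_pi_lambda
  exact fun n => measurable_pi_apply (n + 1)

lemma stationary_eval {μ : Measure (ℕ → A)} (hμ : Stationary μ) {M : Set A}
    (hM : MeasurableSet M) (i : ℕ) : μ {x | x i ∈ M} = μ {x | x 0 ∈ M} := by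
  induction i with
  | zero => rfl
  | succ i ih =>
    have hset : {x : ℕ → A | x (i + 1) ∈ M} = shift ⁻¹' {x | x i ∈ M} := by
      ext x; simp [shift]
    rw [hset, ← ih]
    have : MeasurableSet {x : ℕ → A | x i ∈ M} := (measurable_pi_apply i) hM
    calc μ (shift ⁻¹' {x | x i ∈ M}) = (Measure.map shift μ) {x | x i ∈ M} := by
          rw [Measure.map_apply measurable_shift this]
      _ = μ {x | x i ∈ M} := by rw [hμ]

/-- Two letters are measurably indistinguishable. -/
def atomEq (a b : A) : Prop := ∀ M : Set A, MeasurableSet M → (a ∈ M ↔ b ∈ M)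

lemma atomEq_refl (a : A) : atomEq a a := fun _ _ => Iff.rfl

lemma atomEq_symm {a b : A} (h : atomEq a b) : atomEq b a := fun M hM => (h M hM).symm

/-- The measurable atom of a letter. -/
def atomS (a : A) : Set A := ⋂₀ {M : Set A | MeasurableSet M ∧ a ∈ M}

lemma measurableSet_atomS (a : A) : MeasurableSet (atomS a) := by
  apply MeasurableSet.sInter
  · exact (Set.toFinite _).countable
  · exact fun M hM => hM.1

lemma mem_atomS_iff {a b : A} : b ∈ atomS a ↔ atomEq a b := by
  constructor
  · intro hb M hM
    constructor
    · intro haM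
      exact hb M ⟨hM, haM⟩
    · intro hbM
      by_contra haM
      exact (hb Mᶜ ⟨hM.compl, haM⟩) hbM
  · intro h M hM
    exact (h M hM.1).1 hM.2

lemma self_mem_atomS (a : A) : a ∈ atomS a := mem_atomS_iff.2 (atomEq_refl a)

/-- A letter is bad if it is measurably indistinguishable from another letter. -/
def IsBad (a : A) : Prop := ∃ b, b ≠ a ∧ atomEq a b

/-- The set of bad letters. -/
def BadSet (A : Type*) [MeasurableSpace A] : Set A := {a | IsBad a}

lemma atomS_subset_BadSet {a : A} (ha : IsBad a) : atomS a ⊆ BadSet A := by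
  intro c hc
  have hac : atomEq a c := mem_atomS_iff.1 hc
  by_cases hca : c = a
  · subst hca; exact ha
  · exact ⟨a, fun h => hca h.symm, atomEq_symm hac⟩

lemma measurableSet_BadSet : MeasurableSet (BadSet A) := by
  have : BadSet A = ⋃ a ∈ {a : A | IsBad a}, atomS a := by
    apply Set.Subset.antisymm
    · intro a ha
      exact Set.mem_biUnion ha (self_mem_atomS a)
    · intro c hc
      rcases Set.mem_iUnion₂.1 hc with ⟨a, ha, hca⟩
      exact atomS_subset_BadSet ha hca
  rw [this]
  exact (Set.toFinite _).measurableSet_biUnion fun a _ => measurableSet_atomS a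

lemma atomS_eq_singleton_of_not_bad {a : A} (ha : a ∉ BadSet A) : atomS a = {a} := by
  apply Set.Subset.antisymm
  · intro b hb
    by_contra hba
    exact ha ⟨b, hba, mem_atomS_iff.1 hb⟩
  · intro b hb
    rw [Set.mem_singleton_iff] at hb
    rw [hb]; exact self_mem_atomS a

/-- The set of sequences all of whose letters are good. -/
def GoodSeq (A : Type*) [MeasurableSpace A] : Set (ℕ → A) := {x | ∀ i, x i ∉ BadSet A}

lemma measurableSet_GoodSeq : MeasurableSet (GoodSeq A) := by
  have : GoodSeq A = ⋂ i : ℕ, (fun x : ℕ → A => x i) ⁻¹' (BadSet A)ᶜ := by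
    ext x; simp [GoodSeq]
  rw [this]
  exact MeasurableSet.iInter fun i => (measurable_pi_apply i) measurableSet_BadSet.compl

/-- Measurable sets of sequences are invariant under any coordinatewise map that fixes
every measurable set of letters. -/
lemma preimage_comp_eq_self {t : A → A} (ht : ∀ M : Set A, MeasurableSet M → t ⁻¹' M = M)
    {U : Set (ℕ → A)} (hU : MeasurableSet U) : (fun x : ℕ → A => t ∘ x) ⁻¹' U = U := by
  let m' : MeasurableSpace (ℕ → A) :=
    { MeasurableSet' := fun V => (fun x : ℕ → A => t ∘ x) ⁻¹' V = V
      measurableSet_empty := rfl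
      measurableSet_compl := fun s hs => by
        simp only [Set.preimage_compl] at *
        rw [hs]
      measurableSet_iUnion := fun f hf => by
        simp only [Set.preimage_iUnion] at *
        simp [hf] }
  have hle : (MeasurableSpace.pi : MeasurableSpace (ℕ → A)) ≤ m' := by
    refine iSup_le fun i => ?_
    intro s hs
    rcases hs with ⟨M, hM, rfl⟩
    show (fun x : ℕ → A => t ∘ x) ⁻¹' ((fun x : ℕ → A => x i) ⁻¹' M) = _
    have : (fun x : ℕ → A => t ∘ x) ⁻¹' ((fun x : ℕ → A => x i) ⁻¹' M)
        = (fun x : ℕ → A => x i) ⁻¹' (t ⁻¹' M) := rfl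
    rw [this, ht M hM]
  exact hle U hU

/-- If a letter is measurably indistinguishable from a different letter, then the a.s. limit
frequency of that letter under any probability measure is `0`. -/
lemma limit_zero_of_bad {μ : Measure (ℕ → A)} [IsProbabilityMeasure μ]
    {a a' : A} (hne : a' ≠ a) (heq : atomEq a a') {c : ℝ}
    (h : ∀ᵐ x ∂μ, Tendsto (fun n => freqWord ![a] n x) atTop (𝓝 c)) : c = 0 := by
  classical
  set t : A → A := fun b => if b = a then a' else b with ht_def
  have ht : ∀ M : Set A, MeasurableSet M → t ⁻¹' M = M := by
    intro M hM
    ext b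
    by_cases hb : b = a
    · subst hb
      simp only [Set.mem_preimage, t, if_pos rfl]
      exact (heq M hM).symm
    · simp [t, hb]
  have htne : ∀ b, t b ≠ a := by
    intro b
    by_cases hb : b = a <;> simp [t, hb, hne]
  have h0 : μ {x | ¬ Tendsto (fun n => freqWord ![a] n x) atTop (𝓝 c)} = 0 := by
    simpa [ae_iff] using h
  obtain ⟨N, hsub, hNmeas, hN0⟩ := exists_measurable_superset_of_null h0
  have hNc : (Nᶜ).Nonempty := by
    by_contra hcon
    rw [Set.not_nonempty_iff_eq_empty, Set.compl_empty_iff] at hcon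
    rw [hcon] at hN0
    simp at hN0
  obtain ⟨x₀, hx₀⟩ := hNc
  have hx₁ : (t ∘ x₀) ∉ N := by
    intro hmem
    have hpre := preimage_comp_eq_self ht hNmeas
    have : x₀ ∈ (fun x : ℕ → A => t ∘ x) ⁻¹' N := hmem
    rw [hpre] at this
    exact hx₀ this
  have htend : Tendsto (fun n => freqWord ![a] n (t ∘ x₀)) atTop (𝓝 c) := by
    by_contra hcon
    exact hx₁ (hsub hcon)
  have hzero : ∀ n, freqWord ![a] n (t ∘ x₀) = 0 := by
    intro n
    unfold freqWord
    split
    · rw [Finset.sum_eq_zero, zero_div]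
      intro i _
      rw [if_neg]
      intro hcond
      have h0 := hcond 0
      simp only [Function.comp_apply, Matrix.cons_val_zero] at h0
      exact htne _ h0
    · rfl
  have : Tendsto (fun _ : ℕ => (0:ℝ)) atTop (𝓝 c) := by
    apply htend.congr
    intro n; rw [hzero n]
  exact tendsto_nhds_unique this tendsto_const_nhds

/-- Under a stationary ergodic measure, any bad atom is hit with probability `0` at time 0. -/
lemma measure_atomS_zero {μ : Measure (ℕ → A)} (hμ : StatErg μ) {a : A} (ha : IsBad a) :
    μ {x | x 0 ∈ atomS a} = 0 := by
  classical
  obtain ⟨hprob, hstat, herg⟩ := hμ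
  haveI := hprob
  set s : Set A := atomS a with hs_def
  have hsm : MeasurableSet s := measurableSet_atomS a
  -- each letter of the atom has a.s. frequency limit 0
  have hlim : ∀ b ∈ s, ∀ᵐ x ∂μ, Tendsto (fun n => freqWord ![b] n x) atTop (𝓝 0) := by
    intro b hb
    obtain ⟨c, hc⟩ := herg 1 ![b]
    have hbad : ∃ b', b' ≠ b ∧ atomEq b b' := by
      have hab : atomEq a b := mem_atomS_iff.1 hb
      obtain ⟨a', ha', haa'⟩ := ha
      by_cases hba : b = a
      · subst hba; exact ⟨a', ha', haa'⟩
      · exact ⟨a, fun hh => hba hh.symm, atomEq_symm hab⟩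
    obtain ⟨b', hb'ne, hbb'⟩ := hbad
    have hc0 : c = 0 := limit_zero_of_bad hb'ne hbb' hc
    rwa [hc0] at hc
  set sF : Finset A := Finset.univ.filter (· ∈ s) with hsF_def
  have hmemF : ∀ b : A, b ∈ sF ↔ b ∈ s := by
    intro b; simp [hsF_def]
  have hae : ∀ᵐ x ∂μ, ∀ b ∈ s, Tendsto (fun n => freqWord ![b] n x) atTop (𝓝 0) :=
    (ae_ball_iff ((Set.toFinite s).countable)).2 hlim
  have hsum : ∀ᵐ x ∂μ, Tendsto (fun n => ∑ b ∈ sF, freqWord ![b] n x) atTop (𝓝 0) := by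
    filter_upwards [hae] with x hx
    have := tendsto_finset_sum sF (fun b hb => hx b ((hmemF b).1 hb))
    simpa using this
  set f : ℕ → (ℕ → A) → ℝ :=
    fun n x => (∑ i ∈ Finset.range n, if x i ∈ s then (1:ℝ) else 0) / n with hf_def
  have hfw : ∀ (b : A) (n : ℕ), 1 ≤ n → ∀ x : ℕ → A,
      freqWord ![b] n x = (∑ i ∈ Finset.range n, if x i = b then (1:ℝ) else 0) / n := by
    intro b n hn x
    unfold freqWord
    rw [if_pos hn]
    have h1 : n - 1 + 1 = n := by omega
    norm_num [h1]
  have hfeq : ∀ n, 1 ≤ n → ∀ x, (∑ b ∈ sF, freqWord ![b] n x) = f n x := by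
    intro n hn x
    simp only [hfw _ n hn x]
    rw [← Finset.sum_div]
    show _ = (∑ i ∈ Finset.range n, if x i ∈ s then (1:ℝ) else 0) / (n:ℝ)
    congr 1
    rw [Finset.sum_comm]
    apply Finset.sum_congr rfl
    intro i _
    rw [Finset.sum_ite_eq sF (x i) (fun _ => (1:ℝ))]
    simp [hmemF]
  have hstat0 : ∀ i : ℕ, μ {x | x i ∈ s} = μ {x | x 0 ∈ s} := fun i =>
    stationary_eval hstat hsm i
  have hmeasf : ∀ n, Measurable (f n) := by
    intro n
    apply Measurable.div_const
    apply Finset.measurable_sum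
    intro i _
    have : (fun x : ℕ → A => if x i ∈ s then (1:ℝ) else 0)
        = Set.indicator {x : ℕ → A | x i ∈ s} (fun _ => 1) := by
      ext x; simp [Set.indicator_apply]
    rw [this]
    exact measurable_const.indicator ((measurable_pi_apply i) hsm)
  have hset : ∀ i : ℕ, MeasurableSet {x : ℕ → A | x i ∈ s} :=
    fun i => (measurable_pi_apply i) hsm
  have hint : ∀ n, 1 ≤ n → ∫ x, f n x ∂μ = (μ {x | x 0 ∈ s}).toReal := by
    intro n hn
    have hintg : ∀ i : ℕ, Integrable
        (fun x : ℕ → A => if x i ∈ s then (1:ℝ) else 0) μ := by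
      intro i
      have hrw : (fun x : ℕ → A => if x i ∈ s then (1:ℝ) else 0)
          = Set.indicator {x : ℕ → A | x i ∈ s} (fun _ => 1) := by
        ext x; simp [Set.indicator_apply]
      rw [hrw]
      exact (integrable_const 1).indicator ((measurable_pi_apply i) hsm)
    have : ∫ x, f n x ∂μ
        = (∑ i ∈ Finset.range n, ∫ x, (if x i ∈ s then (1:ℝ) else 0) ∂μ) / n := by
      rw [hf_def]
      simp only []
      rw [integral_div, MeasureTheory.integral_finset_sum]
      exact fun i _ => hintg i
    rw [this]
    have heach : ∀ i ∈ Finset.range n,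
        ∫ x, (if x i ∈ s then (1:ℝ) else 0) ∂μ = (μ {x | x 0 ∈ s}).toReal := by
      intro i _
      have hrw : (fun x : ℕ → A => if x i ∈ s then (1:ℝ) else 0)
          = Set.indicator {x : ℕ → A | x i ∈ s} (fun _ => 1) := by
        ext x; simp [Set.indicator_apply]
      rw [hrw, MeasureTheory.integral_indicator_const (1:ℝ) (hset i)]
      rw [smul_eq_mul, mul_one, Measure.real, hstat0 i]
    rw [Finset.sum_congr rfl heach, Finset.sum_const, Finset.card_range, nsmul_eq_mul]
    have hnne : (n:ℝ) ≠ 0 := Nat.cast_ne_zero.2 (by omega)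
    field_simp
  have hbound : ∀ n, ∀ᵐ x ∂μ, ‖f n x‖ ≤ (1:ℝ) := by
    intro n
    apply Filter.Eventually.of_forall
    intro x
    rcases Nat.eq_zero_or_pos n with hn | hn
    · subst hn; simp [hf_def]
    · have h0 : (0:ℝ) ≤ ∑ i ∈ Finset.range n, if x i ∈ s then (1:ℝ) else 0 :=
        Finset.sum_nonneg fun i _ => by positivity
      have hle : (∑ i ∈ Finset.range n, if x i ∈ s then (1:ℝ) else 0) ≤ n := by
        calc (∑ i ∈ Finset.range n, if x i ∈ s then (1:ℝ) else 0)
            ≤ ∑ _i ∈ Finset.range n, (1:ℝ) := by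
              apply Finset.sum_le_sum
              intro i _
              split <;> norm_num
          _ = n := by simp
      have hnpos : (0:ℝ) < n := by exact_mod_cast hn
      rw [hf_def]
      simp only []
      rw [Real.norm_eq_abs, abs_of_nonneg (div_nonneg h0 (le_of_lt hnpos))]
      rw [div_le_one hnpos]
      exact hle
  have hlimae : ∀ᵐ x ∂μ, Tendsto (fun n => f n x) atTop (𝓝 0) := by
    filter_upwards [hsum] with x hx
    apply hx.congr'
    filter_upwards [eventually_ge_atTop 1] with n hn
    exact hfeq n hn x
  have hDCT := MeasureTheory.tendsto_integral_of_dominated_convergence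
    (F := f) (f := fun _ => (0:ℝ)) (bound := fun _ => (1:ℝ))
    (fun n => (hmeasf n).aestronglyMeasurable) (integrable_const 1) hbound hlimae
  have hconst : Tendsto (fun n => ∫ x, f n x ∂μ) atTop (𝓝 ((μ {x | x 0 ∈ s}).toReal)) := by
    apply Tendsto.congr' _ tendsto_const_nhds
    filter_upwards [eventually_ge_atTop 1] with n hn
    exact (hint n hn).symm
  have hv : (μ {x | x 0 ∈ s}).toReal = 0 := by
    have := tendsto_nhds_unique hconst (by simpa using hDCT)
    simpa using this
  have hfin : μ {x | x 0 ∈ s} ≠ ⊤ := measure_ne_top μ _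
  exact (ENNReal.toReal_eq_zero_iff _).1 hv |>.resolve_right hfin

/-- Stationary ergodic measures are concentrated on good sequences. -/
lemma ergodic_goodSeq {μ : Measure (ℕ → A)} (hμ : StatErg μ) : μ (GoodSeq A)ᶜ = 0 := by
  have hcompl : (GoodSeq A)ᶜ = ⋃ i : ℕ, {x : ℕ → A | x i ∈ BadSet A} := by
    ext x; simp [GoodSeq, BadSet]
  rw [hcompl]
  apply measure_iUnion_null
  intro i
  rw [stationary_eval hμ.2.1 measurableSet_BadSet i]
  have hsub : {x : ℕ → A | x 0 ∈ BadSet A}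
      ⊆ ⋃ a ∈ {a : A | IsBad a}, {x : ℕ → A | x 0 ∈ atomS a} := by
    intro x hx
    exact Set.mem_biUnion hx (self_mem_atomS _)
  apply measure_mono_null hsub
  rw [measure_biUnion_null_iff ((Set.toFinite _).countable)]
  intro a ha
  exact measure_atomS_zero hμ ha

/-- Good-letter cylinders are measurable. -/
lemma measurableSet_wordCyl_good {k : ℕ} {B : Fin k → A} (hB : ∀ i, B i ∉ BadSet A) :
    MeasurableSet (wordCyl B) := by
  have hrw : wordCyl B = ⋂ i : Fin k, (fun x : ℕ → A => x (i:ℕ)) ⁻¹' (atomS (B i)) := by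
    ext x
    simp only [wordCyl, Set.mem_iInter, Set.mem_setOf_eq, Set.mem_preimage]
    constructor
    · intro h i; rw [h i]; exact self_mem_atomS _
    · intro h i
      have hx := h i
      rw [atomS_eq_singleton_of_not_bad (hB i)] at hx
      exact hx
  rw [hrw]
  exact MeasurableSet.iInter fun i => (measurable_pi_apply _) (measurableSet_atomS _)

lemma wordCyl_disjoint {k : ℕ} {B C : Fin k → A} (h : B ≠ C) :
    Disjoint (wordCyl B) (wordCyl C) := by
  rw [Set.disjoint_left]
  intro x hxB hxC
  apply h; funext i
  rw [← hxB i, hxC i]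

lemma wordCyl_bad_null {μ : Measure (ℕ → A)} (hμ : μ (GoodSeq A)ᶜ = 0) {k : ℕ}
    {B : Fin k → A} (hB : ∃ i, B i ∈ BadSet A) : μ (wordCyl B) = 0 := by
  obtain ⟨i, hi⟩ := hB
  apply measure_mono_null _ hμ
  intro x hx
  intro hgood
  exact hgood i (by rw [hx i]; exact hi)

open Classical in
/-- Decomposition of a finite-horizon measurable set into good cylinders. -/
lemma measure_horizon_set {μ : Measure (ℕ → A)} [IsProbabilityMeasure μ]
    (hμG : μ (GoodSeq A)ᶜ = 0) {n : ℕ} (p : (Fin n → A) → Prop)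
    {S : Set (ℕ → A)} (hS : MeasurableSet S)
    (hSp : ∀ x : ℕ → A, x ∈ S ↔ p (fun i : Fin n => x i)) :
    (μ S).toReal = ∑ v ∈ Finset.univ.filter
        (fun v : Fin n → A => p v ∧ ∀ i, v i ∉ BadSet A), (μ (wordCyl v)).toReal := by
  classical
  set Tg := Finset.univ.filter (fun v : Fin n → A => p v ∧ ∀ i, v i ∉ BadSet A) with hTg
  have hTg_mem : ∀ v : Fin n → A, v ∈ Tg ↔ p v ∧ ∀ i, v i ∉ BadSet A := by
    intro v; simp [hTg]
  have hdecomp : S ∩ GoodSeq A = ⋃ v ∈ Tg, (wordCyl v ∩ GoodSeq A) := by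
    ext x
    simp only [Set.mem_inter_iff, Set.mem_iUnion, exists_prop]
    constructor
    · rintro ⟨hxS, hxG⟩
      refine ⟨fun i : Fin n => x i, ?_, ?_, hxG⟩
      · rw [hTg_mem]
        exact ⟨(hSp x).1 hxS, fun i => hxG i⟩
      · intro i; rfl
    · rintro ⟨v, hv, hxv, hxG⟩
      refine ⟨?_, hxG⟩
      have hvx : (fun i : Fin n => x i) = v := funext fun i => hxv i
      rw [hSp x, hvx]
      exact ((hTg_mem v).1 hv).1
  have h1 : μ S = μ (S ∩ GoodSeq A) := (measure_inter_conull hμG).symm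
  have h2 : μ (S ∩ GoodSeq A) = ∑ v ∈ Tg, μ (wordCyl v ∩ GoodSeq A) := by
    rw [hdecomp]
    apply measure_biUnion_finset
    · intro v hv w hw hvw
      exact (wordCyl_disjoint hvw).mono Set.inter_subset_left Set.inter_subset_left
    · intro v hv
      exact (measurableSet_wordCyl_good ((hTg_mem v).1 hv).2).inter measurableSet_GoodSeq
  have h3 : ∀ v ∈ Tg, μ (wordCyl v ∩ GoodSeq A) = μ (wordCyl v) := fun v _ =>
    measure_inter_conull hμG
  rw [h1, h2, Finset.sum_congr rfl h3, ENNReal.toReal_sum]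
  exact fun v _ => measure_ne_top μ _

lemma sum_good_toReal_le {μ : Measure (ℕ → A)} [IsProbabilityMeasure μ] {k : ℕ}
    (F : Finset (Fin k → A)) (hF : ∀ v ∈ F, ∀ i, v i ∉ BadSet A) :
    ∑ v ∈ F, (μ (wordCyl v)).toReal ≤ 1 := by
  have hsum : ∑ v ∈ F, μ (wordCyl v) = μ (⋃ v ∈ F, wordCyl v) := by
    rw [measure_biUnion_finset]
    · intro v hv w hw hvw
      exact wordCyl_disjoint hvw
    · intro v hv
      exact measurableSet_wordCyl_good (hF v hv)
  calc ∑ v ∈ F, (μ (wordCyl v)).toReal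
      = (∑ v ∈ F, μ (wordCyl v)).toReal :=
        (ENNReal.toReal_sum fun v _ => measure_ne_top μ _).symm
    _ = (μ (⋃ v ∈ F, wordCyl v)).toReal := by rw [hsum]
    _ ≤ (1 : ENNReal).toReal := by
        apply ENNReal.toReal_mono ENNReal.one_ne_top
        exact prob_le_one
    _ = 1 := by simp

lemma wt_pos (k : ℕ) : 0 < wt k := by
  unfold wt
  positivity

lemma summable_wt : Summable (wt : ℕ → ℝ) := by
  have hs : Summable fun k : ℕ => 1 / ((k:ℝ) + 1) ^ 2 := by
    have h1 : Summable fun n : ℕ => 1 / (n:ℝ) ^ 2 :=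
      Real.summable_one_div_nat_pow.2 one_lt_two
    have := (summable_nat_add_iff 1).2 h1
    apply this.congr
    intro k
    push_cast
    ring
  apply Summable.of_nonneg_of_le (fun k => le_of_lt (wt_pos k)) _ hs
  intro k
  unfold wt
  rw [div_le_div_iff₀ (by positivity) (by positivity)]
  nlinarith [sq_nonneg ((k:ℝ) + 1)]

open Classical in
lemma inner_sum_le {ρ μ : Measure (ℕ → A)} [IsProbabilityMeasure ρ] [IsProbabilityMeasure μ]
    (hρ : ρ (GoodSeq A)ᶜ = 0) (hμ : μ (GoodSeq A)ᶜ = 0) (k : ℕ) :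
    ∑ B : Fin k → A, |(ρ (wordCyl B)).toReal - (μ (wordCyl B)).toReal| ≤ 2 := by
  classical
  rw [← Finset.sum_filter_add_sum_filter_not Finset.univ
    (fun B : Fin k → A => ∀ i, B i ∉ BadSet A)]
  have hbad : ∑ B ∈ Finset.univ.filter
      (fun B : Fin k → A => ¬ ∀ i, B i ∉ BadSet A),
      |(ρ (wordCyl B)).toReal - (μ (wordCyl B)).toReal| = 0 := by
    apply Finset.sum_eq_zero
    intro B hB
    rw [Finset.mem_filter] at hB
    have hex : ∃ i, B i ∈ BadSet A := by
      by_contra hcon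
      push_neg at hcon
      exact hB.2 hcon
    rw [wordCyl_bad_null hρ hex, wordCyl_bad_null hμ hex]
    simp
  rw [hbad, add_zero]
  have hgood : ∀ B ∈ Finset.univ.filter (fun B : Fin k → A => ∀ i, B i ∉ BadSet A),
      |(ρ (wordCyl B)).toReal - (μ (wordCyl B)).toReal|
        ≤ (ρ (wordCyl B)).toReal + (μ (wordCyl B)).toReal := by
    intro B _
    have h1 : (0:ℝ) ≤ (ρ (wordCyl B)).toReal := ENNReal.toReal_nonneg
    have h2 : (0:ℝ) ≤ (μ (wordCyl B)).toReal := ENNReal.toReal_nonneg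
    rw [abs_sub_le_iff]
    constructor <;> linarith
  calc ∑ B ∈ Finset.univ.filter (fun B : Fin k → A => ∀ i, B i ∉ BadSet A),
        |(ρ (wordCyl B)).toReal - (μ (wordCyl B)).toReal|
      ≤ ∑ B ∈ Finset.univ.filter (fun B : Fin k → A => ∀ i, B i ∉ BadSet A),
        ((ρ (wordCyl B)).toReal + (μ (wordCyl B)).toReal) := Finset.sum_le_sum hgood
    _ = (∑ B ∈ Finset.univ.filter (fun B : Fin k → A => ∀ i, B i ∉ BadSet A),
          (ρ (wordCyl B)).toReal)
        + ∑ B ∈ Finset.univ.filter (fun B : Fin k → A => ∀ i, B i ∉ BadSet A),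
          (μ (wordCyl B)).toReal := Finset.sum_add_distrib
    _ ≤ 1 + 1 := by
        apply add_le_add
        · exact sum_good_toReal_le _ fun v hv => (Finset.mem_filter.1 hv).2
        · exact sum_good_toReal_le _ fun v hv => (Finset.mem_filter.1 hv).2
    _ = 2 := by norm_num

lemma dd_term_le {ρ μ : Measure (ℕ → A)} [IsProbabilityMeasure ρ] [IsProbabilityMeasure μ]
    (hρ : ρ (GoodSeq A)ᶜ = 0) (hμ : μ (GoodSeq A)ᶜ = 0) (k : ℕ) :
    wt k * ∑ B : Fin (k+1) → A, |(ρ (wordCyl B)).toReal - (μ (wordCyl B)).toReal|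
      ≤ dd ρ μ := by
  have hnonneg : ∀ j : ℕ, 0 ≤ wt j * ∑ B : Fin (j+1) → A,
      |(ρ (wordCyl B)).toReal - (μ (wordCyl B)).toReal| := by
    intro j
    apply mul_nonneg (le_of_lt (wt_pos j))
    exact Finset.sum_nonneg fun B _ => abs_nonneg _
  have hsummable : Summable (fun k : ℕ => wt k * ∑ B : Fin (k+1) → A,
      |(ρ (wordCyl B)).toReal - (μ (wordCyl B)).toReal|) := by
    apply Summable.of_nonneg_of_le hnonneg _ (summable_wt.mul_left 2)
    intro j
    calc wt j * ∑ B : Fin (j+1) → A, |(ρ (wordCyl B)).toReal - (μ (wordCyl B)).toReal|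
        ≤ wt j * 2 := by
          apply mul_le_mul_of_nonneg_left (inner_sum_le hρ hμ (j+1)) (le_of_lt (wt_pos j))
      _ = 2 * wt j := by ring
  exact Summable.le_tsum hsummable k fun j _ => hnonneg j

open Classical in
/-- The main auxiliary lemma: one direction of Statement 12. -/
lemma main_aux (H H' : Set (Measure (ℕ → A)))
    (hsub : H ⊆ ergSet A) (hsub' : H' ⊆ ergSet A) (hmeas' : MeasurableSet H')
    (ψ : ℕ → (ℕ → A) → Bool) (hψm : ∀ n, Measurable (ψ n)) (hψh : FinHorizon ψ)
    (hcons : ∀ α : ℝ, 0 < α → ∃ N : ℕ, ∀ n ≥ N,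
      (∀ μ ∈ H, μ {x | ψ n x = true} < ENNReal.ofReal α) ∧
      (∀ μ ∈ H', μ {x | ψ n x = false} < ENNReal.ofReal α)) :
    ∀ ρ ∈ closureD H, ∀ W, IsErgodicDecomp ρ W → W H' = 0 := by
  classical
  intro ρ hρ W hW
  by_contra hWne
  obtain ⟨hρprob, hρstat, hρcl⟩ := hρ
  obtain ⟨hWprob, hWerg, hWrep⟩ := hW
  haveI := hρprob
  haveI := hWprob
  -- The alphabet is nonempty
  have hAne : Nonempty A := by
    by_contra hA
    rw [not_nonempty_iff] at hA
    have hempty : (Set.univ : Set (ℕ → A)) = ∅ := by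
      rw [Set.univ_eq_empty_iff]
      exact ⟨fun x => hA.false (x 0)⟩
    have h1 : ρ Set.univ = 1 := measure_univ
    rw [hempty] at h1
    simp at h1
  obtain ⟨a₀⟩ := hAne
  set d : ℝ := (W H').toReal with hd_def
  have hWle : W H' ≤ 1 := prob_le_one
  have hd_pos : 0 < d :=
    ENNReal.toReal_pos hWne (ne_top_of_le_ne_top ENNReal.one_ne_top hWle)
  have hd_le : d ≤ 1 := by
    rw [hd_def]
    calc (W H').toReal ≤ (1 : ENNReal).toReal := ENNReal.toReal_mono ENNReal.one_ne_top hWle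
      _ = 1 := by simp
  set α : ℝ := d / 4 with hα_def
  have hα_pos : 0 < α := by positivity
  have hα_le : α ≤ 1 / 4 := by rw [hα_def]; linarith
  obtain ⟨N, hN⟩ := hcons α hα_pos
  have hNn := hN (N + 1) (Nat.le_succ N)
  set n := N + 1 with hn_def
  set S : Set (ℕ → A) := {x | ψ n x = true} with hS_def
  have hSmeas : MeasurableSet S := by
    have : S = ψ n ⁻¹' {true} := by ext x; simp [hS_def]
    rw [this]
    exact hψm n (measurableSet_singleton true)
  -- Lower bound on `μ S` for `μ ∈ H'`
  have hμS_lb : ∀ μ ∈ H', ENNReal.ofReal (1 - α) ≤ μ S := by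
    intro μ hμ
    haveI : IsProbabilityMeasure μ := (hsub' hμ).1
    have hScompl : Sᶜ = {x | ψ n x = false} := by
      ext x; simp [hS_def]
    have hfalse : μ Sᶜ < ENNReal.ofReal α := by rw [hScompl]; exact hNn.2 μ hμ
    have hsum : μ S + μ Sᶜ = 1 := (measure_add_measure_compl hSmeas).trans measure_univ
    have h1le : (1 : ENNReal) ≤ μ S + ENNReal.ofReal α := by
      rw [← hsum]
      exact add_le_add le_rfl (le_of_lt hfalse)
    have hkey1 : (1 : ENNReal) - ENNReal.ofReal α ≤ μ S := tsub_le_iff_right.2 h1le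
    have hofr : ENNReal.ofReal (1 - α) + ENNReal.ofReal α = 1 := by
      rw [← ENNReal.ofReal_add (by linarith) (le_of_lt hα_pos)]
      norm_num
    have hkey2 : (1 : ENNReal) - ENNReal.ofReal α = ENNReal.ofReal (1 - α) :=
      ENNReal.sub_eq_of_eq_add ENNReal.ofReal_ne_top hofr.symm
    exact hkey2 ▸ hkey1
  -- Lower bound on `ρ S` via the ergodic decomposition
  have hρS_lb : ENNReal.ofReal (1 - α) * W H' ≤ ρ S := by
    rw [hWrep S hSmeas]
    have hpt : Set.indicator H' (fun _ => ENNReal.ofReal (1 - α)) ≤ fun μ => μ S := by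
      intro μ
      by_cases hμ : μ ∈ H'
      · rw [Set.indicator_of_mem hμ]
        exact hμS_lb μ hμ
      · rw [Set.indicator_of_notMem hμ]
        exact zero_le
    calc ENNReal.ofReal (1 - α) * W H'
        = ∫⁻ μ, Set.indicator H' (fun _ => ENNReal.ofReal (1 - α)) μ ∂W := by
          rw [MeasureTheory.lintegral_indicator hmeas',
            MeasureTheory.setLIntegral_const]
      _ ≤ ∫⁻ μ, μ S ∂W := lintegral_mono hpt
  have hρS_lbR : (1 - α) * d ≤ (ρ S).toReal := by
    have h1 : ((ENNReal.ofReal (1 - α)) * W H').toReal = (1 - α) * d := by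
      rw [ENNReal.toReal_mul, ENNReal.toReal_ofReal (by linarith)]
    rw [← h1]
    exact ENNReal.toReal_mono (measure_ne_top ρ S) hρS_lb
  -- Good sequences
  have hergG : ∀ μ' ∈ ergSet A, μ' (GoodSeq A)ᶜ = 0 := fun μ' hμ' => ergodic_goodSeq hμ'
  have hρG : ρ (GoodSeq A)ᶜ = 0 := by
    rw [hWrep _ measurableSet_GoodSeq.compl]
    have hu : Measurable (fun μ' : Measure (ℕ → A) => μ' (GoodSeq A)ᶜ) :=
      Measure.measurable_coe measurableSet_GoodSeq.compl
    rw [MeasureTheory.lintegral_eq_zero_iff hu]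
    have hZ : MeasurableSet {μ' : Measure (ℕ → A) | μ' (GoodSeq A)ᶜ = 0} :=
      hu (measurableSet_singleton 0)
    have hWZ : W {μ' : Measure (ℕ → A) | μ' (GoodSeq A)ᶜ = 0} = 1 := by
      apply le_antisymm prob_le_one
      calc (1 : ENNReal) = W (ergSet A) := hWerg.symm
        _ ≤ W {μ' : Measure (ℕ → A) | μ' (GoodSeq A)ᶜ = 0} :=
          measure_mono fun μ' hμ' => hergG μ' hμ'
    have hcompl0 : W {μ' : Measure (ℕ → A) | μ' (GoodSeq A)ᶜ = 0}ᶜ = 0 := by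
      rw [measure_compl hZ (measure_ne_top _ _), hWZ, measure_univ]
      simp
    rw [Filter.EventuallyEq, ae_iff]
    convert hcompl0 using 2
    ext μ'; simp
  set ε : ℝ := wt N * (d / 4) with hε_def
  have hε_pos : 0 < ε := mul_pos (wt_pos N) (by linarith)
  obtain ⟨μ₀, hμ₀H, hdd⟩ := hρcl ε hε_pos
  haveI : IsProbabilityMeasure μ₀ := (hsub hμ₀H).1
  have hμ₀G : μ₀ (GoodSeq A)ᶜ = 0 := hergG μ₀ (hsub hμ₀H)
  -- finite-horizon decomposition
  set ext : (Fin n → A) → (ℕ → A) := fun v i => if h : i < n then v ⟨i, h⟩ else a₀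
    with hext_def
  set p : (Fin n → A) → Prop := fun v => ψ n (ext v) = true with hp_def
  have hSp : ∀ x : ℕ → A, x ∈ S ↔ p (fun i : Fin n => x i) := by
    intro x
    have hagree : ψ n x = ψ n (ext (fun i : Fin n => x i)) := by
      apply hψh n
      intro i hi
      simp [hext_def, hi]
    constructor
    · intro hx
      show ψ n (ext (fun i : Fin n => x i)) = true
      rw [← hagree]; exact hx
    · intro hx
      show ψ n x = true
      rw [hagree]; exact hx
  have hρ_eq := measure_horizon_set hρG p hSmeas hSp
  have hμ₀_eq := measure_horizon_set hμ₀G p hSmeas hSp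
  set D : ℝ := ∑ B : Fin n → A, |(ρ (wordCyl B)).toReal - (μ₀ (wordCyl B)).toReal| with hD_def
  have hDle : wt N * D ≤ dd ρ μ₀ := dd_term_le hρG hμ₀G N
  have hD_lt : D < d / 4 := by
    have h2 : wt N * D < wt N * (d / 4) := lt_of_le_of_lt hDle (by rw [hε_def] at hdd; exact hdd)
    exact lt_of_mul_lt_mul_left h2 (le_of_lt (wt_pos N))
  have hμ₀S : (μ₀ S).toReal < α := ENNReal.toReal_lt_of_lt_ofReal (hNn.1 μ₀ hμ₀H)
  have habs : ∀ F : Finset (Fin n → A), ∑ v ∈ F, (ρ (wordCyl v)).toReal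
      ≤ (∑ v ∈ F, (μ₀ (wordCyl v)).toReal) + D := by
    intro F
    calc ∑ v ∈ F, (ρ (wordCyl v)).toReal
        ≤ ∑ v ∈ F, ((μ₀ (wordCyl v)).toReal
            + |(ρ (wordCyl v)).toReal - (μ₀ (wordCyl v)).toReal|) := by
          apply Finset.sum_le_sum
          intro v _
          have := le_abs_self ((ρ (wordCyl v)).toReal - (μ₀ (wordCyl v)).toReal)
          linarith
      _ = (∑ v ∈ F, (μ₀ (wordCyl v)).toReal)
          + ∑ v ∈ F, |(ρ (wordCyl v)).toReal - (μ₀ (wordCyl v)).toReal| :=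
          Finset.sum_add_distrib
      _ ≤ (∑ v ∈ F, (μ₀ (wordCyl v)).toReal) + D := by
          apply add_le_add le_rfl
          rw [hD_def]
          apply Finset.sum_le_sum_of_subset_of_nonneg (Finset.subset_univ F)
          intro B _ _
          exact abs_nonneg _
  have hsum_le : (ρ S).toReal ≤ (μ₀ S).toReal + D := by
    rw [hρ_eq, hμ₀_eq]
    exact habs _
  have hfinal : (ρ S).toReal < d / 2 := by
    calc (ρ S).toReal ≤ (μ₀ S).toReal + D := hsum_le
      _ < α + d / 4 := add_lt_add hμ₀S hD_lt
      _ = d / 2 := by rw [hα_def]; ring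
  nlinarith [hρS_lbR, hfinal, hd_pos, hd_le, hα_def]

end Aux

/-- uniform testing, necessity. If there exists a uniformly consistent
test for `H₀` against `H₁`, then `W_ρ(H_{1−i}) = 0` for every `ρ ∈ cl(H_i)`, `i ∈ {0,1}`. -/
theorem uniform_test_necessity (H₀ H₁ : Set (Measure (ℕ → A)))
    (hsub₀ : H₀ ⊆ ergSet A) (hsub₁ : H₁ ⊆ ergSet A)
    (hmeas₀ : MeasurableSet H₀) (hmeas₁ : MeasurableSet H₁)
    (hex : ∃ φ : ℕ → (ℕ → A) → Bool,
      (∀ n, Measurable (φ n)) ∧ FinHorizon φ ∧ UnifConsistent φ H₀ H₁) :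
    (∀ ρ ∈ closureD H₀, ∀ W, IsErgodicDecomp ρ W → W H₁ = 0) ∧
    (∀ ρ ∈ closureD H₁, ∀ W, IsErgodicDecomp ρ W → W H₀ = 0) := by
  obtain ⟨φ, hφm, hφh, hφc⟩ := hex
  constructor
  · exact main_aux H₀ H₁ hsub₀ hsub₁ hmeas₁ φ hφm hφh hφc
  · apply main_aux H₁ H₀ hsub₁ hsub₀ hmeas₀ (fun n x => !(φ n x))
    · intro n
      intro s _
      show MeasurableSet (φ n ⁻¹' ((fun b => !b) ⁻¹' s))
      exact hφm n trivial
    · intro n x y hxy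
      show (!(φ n x)) = (!(φ n y))
      rw [hφh n x y hxy]
    · intro α hα
      obtain ⟨N, hN⟩ := hφc α hα
      refine ⟨N, fun n hn => ⟨?_, ?_⟩⟩
      · intro μ hμ
        have h := (hN n hn).2 μ hμ
        have hset : {x | (!(φ n x)) = true} = {x | φ n x = false} := by
          ext x; simp
        rw [hset]
        exact h
      · intro μ hμ
        have h := (hN n hn).1 μ hμ
        have hset : {x | (!(φ n x)) = false} = {x | φ n x = true} := by
          ext x; simp
        rw [hset]
        exact h

end Paper
end

section
/- (No asymmetric test for independence.) Let I be the set of all stationary ergodic process distributions on pairs of binary sequences (i.e., over the alphabet {0,1}×{0,1}) under which the first coordinate process (X^1_t)_{t∈ℕ} is independent of the second coordinate process (X^2_t)_{t∈ℕ}. There is no asymmetrically consistent test for I against its complement E∖I in the set E of all stationary ergodic process distributions on pairs. -/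
open MeasureTheory Filter Topology

namespace Paper

variable {A : Type*} [Fintype A] [MeasurableSpace A]

/-- Independence of the two coordinate processes of a process distribution on pairs of
binary sequences:
`ρ(X^1_{1..t} ∈ T₁, X^2_{1..t} ∈ T₂) = ρ(X^1_{1..t} ∈ T₁) · ρ(X^2_{1..t} ∈ T₂)` for all
`T₁, T₂ ⊆ {0,1}^t` and all `t`. -/
def IndepCoords (ρ : Measure (ℕ → Bool × Bool)) : Prop :=
  ∀ (t : ℕ) (T₁ T₂ : Set (Fin t → Bool)),
    ρ {z | (fun i : Fin t => (z i).1) ∈ T₁ ∧ (fun i : Fin t => (z i).2) ∈ T₂} =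
      ρ {z | (fun i : Fin t => (z i).1) ∈ T₁} * ρ {z | (fun i : Fin t => (z i).2) ∈ T₂}

open scoped ENNReal

-- ===================== auxiliary development =====================
section Aux
open Finset

lemma shift_sum (f : ℕ → ℕ) (Q : ℕ) (hf : ∀ i, f (i + Q) = f i) (s : ℕ) :
    ∑ i ∈ range Q, f (s + i) = ∑ i ∈ range Q, f i := by
  induction s with
  | zero => simp
  | succ s ih =>
    have h1 := Finset.sum_range_succ (fun i => f (s + i)) Q
    have h2 := Finset.sum_range_succ' (fun i => f (s + i)) Q
    have hfs : f (s + Q) = f s := hf s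
    have key : ∑ i ∈ range Q, f (s + (i + 1)) = ∑ i ∈ range Q, f (s + i) := by
      have h3 : ∑ i ∈ range Q, f (s + (i+1)) + f (s + 0) = ∑ i ∈ range Q, f (s + i) + f (s + Q) := by
        rw [← h1, ← h2]
      rw [hfs] at h3
      simp only [Nat.add_zero] at h3
      omega
    have heq : ∑ i ∈ range Q, f (s + 1 + i) = ∑ i ∈ range Q, f (s + (i + 1)) :=
      Finset.sum_congr rfl fun i _ => by ring_nf
    rw [heq, key, ih]

lemma filter_card_chunk (P : ℕ → Prop) [DecidablePred P] (Q : ℕ)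
    (hP : ∀ i, P (i + Q) ↔ P i) (a : ℕ) :
    #((range (a + Q)).filter P) = #((range a).filter P) + #((range Q).filter P) := by
  rw [Finset.card_filter, Finset.card_filter, Finset.card_filter, Finset.sum_range_add]
  congr 1
  exact shift_sum (fun i => if P i then 1 else 0) Q
    (fun i => by simp only [hP i]) a

lemma filter_card_mul (P : ℕ → Prop) [DecidablePred P] (Q : ℕ)
    (hP : ∀ i, P (i + Q) ↔ P i) (m : ℕ) :
    #((range (m * Q)).filter P) = m * #((range Q).filter P) := by
  induction m with
  | zero => simp
  | succ m ih =>
    have h : (m + 1) * Q = m * Q + Q := by ring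
    rw [h, filter_card_chunk P Q hP, ih]; ring

lemma filter_card_mono (P : ℕ → Prop) [DecidablePred P] {a b : ℕ} (h : a ≤ b) :
    #((range a).filter P) ≤ #((range b).filter P) :=
  Finset.card_le_card (Finset.filter_subset_filter _ (Finset.range_subset_range.mpr h))

/-- frequency of a periodic event converges to its density over one period. -/
lemma periodic_freq_tendsto (P : ℕ → Prop) [DecidablePred P] (Q : ℕ) (hQ : 0 < Q)
    (hP : ∀ i, P (i + Q) ↔ P i) :
    Tendsto (fun N => (#((range N).filter P) : ℝ) / N) atTop
      (𝓝 ((#((range Q).filter P) : ℝ) / Q)) := by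
  set K := #((range Q).filter P) with hK
  have hbound : ∀ N : ℕ, 1 ≤ N →
      |(#((range N).filter P) : ℝ) / N - (K : ℝ) / Q| ≤ (K : ℝ) / N := by
    intro N hN
    set c := #((range N).filter P) with hc
    have hd := Nat.div_add_mod N Q
    have hmod := Nat.mod_lt N hQ
    have h1b : Q * (N / Q) = (N / Q) * Q := Nat.mul_comm _ _
    have h1 : N ≤ (N / Q) * Q + Q := by omega
    have h1c : (N / Q) * Q ≤ N := Nat.div_mul_le_self N Q
    have hm1 : (N/Q) * K ≤ c := by
      calc (N/Q) * K = #((range ((N/Q) * Q)).filter P) := (filter_card_mul P Q hP _).symm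
        _ ≤ c := filter_card_mono P h1c
    have hm2 : c ≤ (N/Q) * K + K := by
      calc c ≤ #((range ((N/Q) * Q + Q)).filter P) := filter_card_mono P h1
        _ = #((range ((N/Q)*Q)).filter P) + K := by rw [filter_card_chunk P Q hP]
        _ = (N/Q) * K + K := by rw [filter_card_mul P Q hP]
    have hN0 : (0:ℝ) < N := by exact_mod_cast hN
    have hQ0 : (0:ℝ) < Q := by exact_mod_cast hQ
    have hNles : (N : ℝ) ≤ ((N/Q : ℕ):ℝ) * Q + Q := by exact_mod_cast h1
    have hNge : (((N/Q : ℕ):ℝ) * Q : ℝ) ≤ N := by exact_mod_cast h1c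
    have hcge : (((N/Q : ℕ):ℝ) * K) ≤ (c:ℝ) := by exact_mod_cast hm1
    have hcle : (c : ℝ) ≤ ((N/Q : ℕ):ℝ) * K + K := by exact_mod_cast hm2
    have habs : |(c : ℝ) * Q - (N:ℝ) * K| ≤ (K:ℝ) * Q := by
      rw [abs_le]
      constructor <;> nlinarith [Nat.cast_nonneg (α := ℝ) K, Nat.cast_nonneg (α := ℝ) c]
    have heq : (c : ℝ) / N - (K:ℝ) / Q = ((c:ℝ) * Q - (N:ℝ) * K) / ((N:ℝ) * Q) :=
      div_sub_div _ _ (ne_of_gt hN0) (ne_of_gt hQ0)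
    rw [heq, abs_div, abs_of_pos (mul_pos hN0 hQ0)]
    have step1 : |(c:ℝ) * Q - (N:ℝ) * K| / ((N:ℝ) * Q) ≤ ((K:ℝ) * Q) / ((N:ℝ) * Q) := by
      gcongr
    have step2 : ((K:ℝ) * Q) / ((N:ℝ) * Q) = (K:ℝ) / N :=
      mul_div_mul_right _ _ (ne_of_gt hQ0)
    rw [← step2]; exact step1
  have h2 : Tendsto (fun N : ℕ => (K:ℝ)/N) atTop (𝓝 0) :=
    tendsto_const_div_atTop_nhds_zero_nat (K:ℝ)
  rw [tendsto_iff_dist_tendsto_zero]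
  refine squeeze_zero' (Filter.Eventually.of_forall fun N => dist_nonneg) ?_ h2
  filter_upwards [eventually_ge_atTop 1] with N hN
  rw [Real.dist_eq]
  exact hbound N hN

-- CRT counting
lemma crt_count (L : ℕ) (hL : 0 < L) (cop : Nat.Coprime 3 L)
    (P1 P2 : ℕ → Prop) [DecidablePred P1] [DecidablePred P2] :
    #((range (3*L)).filter (fun u => P1 (u % 3) ∧ P2 (u % L))) =
      #((range 3).filter P1) * #((range L).filter P2) := by
  have h3L : 0 < 3 * L := by omega
  have key : ∀ a b : ℕ, a < 3 → b < L →
      ((Nat.chineseRemainder cop a b : ℕ) % (3*L)) % 3 = a ∧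
      ((Nat.chineseRemainder cop a b : ℕ) % (3*L)) % L = b := by
    intro a b ha hb
    have hk3 : (Nat.chineseRemainder cop a b : ℕ) % 3 = a := by
      have h := (Nat.chineseRemainder cop a b).2.1
      rwa [Nat.ModEq, Nat.mod_eq_of_lt ha] at h
    have hkL : (Nat.chineseRemainder cop a b : ℕ) % L = b := by
      have h := (Nat.chineseRemainder cop a b).2.2
      rwa [Nat.ModEq, Nat.mod_eq_of_lt hb] at h
    constructor
    · rw [Nat.mod_mod_of_dvd _ ⟨L, rfl⟩]; exact hk3
    · rw [Nat.mod_mod_of_dvd _ ⟨3, by ring⟩]; exact hkL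
  rw [← Finset.card_product]
  apply Finset.card_nbij' (fun u => (u % 3, u % L))
    (fun p => (Nat.chineseRemainder cop p.1 p.2 : ℕ) % (3 * L))
  · intro u hu
    simp only [Finset.mem_coe, Finset.mem_filter, Finset.mem_range] at hu
    simp only [Finset.mem_coe, Finset.mem_product, Finset.mem_filter, Finset.mem_range]
    exact ⟨⟨Nat.mod_lt _ (by norm_num), hu.2.1⟩, ⟨Nat.mod_lt _ hL, hu.2.2⟩⟩
  · intro p hp
    simp only [Finset.mem_coe, Finset.mem_product, Finset.mem_filter, Finset.mem_range] at hp
    obtain ⟨⟨ha, hP1⟩, hb, hP2⟩ := hp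
    obtain ⟨k3, kL⟩ := key p.1 p.2 ha hb
    simp only [Finset.mem_coe, Finset.mem_filter, Finset.mem_range]
    refine ⟨Nat.mod_lt _ h3L, ?_, ?_⟩
    · rw [k3]; exact hP1
    · rw [kL]; exact hP2
  · intro u hu
    simp only [Finset.mem_coe, Finset.mem_filter, Finset.mem_range] at hu
    have h1 : (Nat.chineseRemainder cop (u % 3) (u % L) : ℕ) ≡ u [MOD 3] :=
      (Nat.chineseRemainder cop (u % 3) (u % L)).2.1.trans (Nat.mod_modEq u 3)
    have h2 : (Nat.chineseRemainder cop (u % 3) (u % L) : ℕ) ≡ u [MOD L] :=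
      (Nat.chineseRemainder cop (u % 3) (u % L)).2.2.trans (Nat.mod_modEq u L)
    have h3 : (Nat.chineseRemainder cop (u % 3) (u % L) : ℕ) ≡ u [MOD 3 * L] :=
      (Nat.modEq_and_modEq_iff_modEq_mul cop).mp ⟨h1, h2⟩
    have h4 : (Nat.chineseRemainder cop (u % 3) (u % L) : ℕ) % (3 * L) = u % (3 * L) := h3
    show (Nat.chineseRemainder cop (u % 3) (u % L) : ℕ) % (3 * L) = u
    rw [h4, Nat.mod_eq_of_lt hu.1]
  · intro p hp
    simp only [Finset.mem_coe, Finset.mem_product, Finset.mem_filter, Finset.mem_range] at hp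
    obtain ⟨⟨ha, _⟩, hb, _⟩ := hp
    obtain ⟨k3, kL⟩ := key p.1 p.2 ha hb
    exact Prod.ext k3 kL

/-- the locked pattern -/
def zetaP (L s : ℕ) : Bool × Bool := (decide (s % 3 = 2), decide (6 ≤ s % L % 9))

/-- the orbit of the pattern at phase `u` -/
def orb (L u : ℕ) : ℕ → Bool × Bool := fun t => zetaP L (u + t)

/-- the random-phase process measure -/
noncomputable def nuP (L Q : ℕ) : Measure (ℕ → Bool × Bool) :=
  ((Q : ℝ≥0∞))⁻¹ • ∑ u ∈ Finset.range Q, Measure.dirac (orb L u)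

lemma measurable_shift_s19 : Measurable (shift : (ℕ → Bool × Bool) → (ℕ → Bool × Bool)) :=
  measurable_pi_lambda _ fun n => measurable_pi_apply (n+1)

lemma nuP_apply (L Q : ℕ) {s : Set (ℕ → Bool × Bool)} (hs : MeasurableSet s)
    [DecidablePred fun u => orb L u ∈ s] :
    nuP L Q s = ((Q : ℝ≥0∞))⁻¹ * ((((Finset.range Q).filter fun u => orb L u ∈ s).card : ℕ) : ℝ≥0∞) := by
  rw [nuP, Measure.smul_apply, Measure.finset_sum_apply, smul_eq_mul]
  congr 1
  calc ∑ u ∈ range Q, Measure.dirac (orb L u) s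
      = ∑ u ∈ range Q, (if orb L u ∈ s then (1:ℝ≥0∞) else 0) := by
        refine Finset.sum_congr rfl fun u _ => ?_
        rw [Measure.dirac_apply' _ hs, Set.indicator_apply]
        by_cases h : orb L u ∈ s <;> simp [h]
    _ = _ := Finset.sum_boole _ _

lemma nuP_prob (L Q : ℕ) (hQ : 0 < Q) : IsProbabilityMeasure (nuP L Q) := by
  classical
  constructor
  rw [nuP_apply L Q MeasurableSet.univ]
  rw [Finset.filter_true_of_mem (fun x _ => Set.mem_univ _), Finset.card_range]
  exact ENNReal.inv_mul_cancel (by exact_mod_cast hQ.ne') (ENNReal.natCast_ne_top Q)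

lemma orb_per (L Q : ℕ) (hper : ∀ s, zetaP L (s + Q) = zetaP L s) (u : ℕ) :
    orb L (u + Q) = orb L u := funext fun t => by
  show zetaP L (u + Q + t) = zetaP L (u + t)
  rw [show u + Q + t = (u + t) + Q from by ring, hper]

lemma shift_orb (L u : ℕ) : shift (orb L u) = orb L (u + 1) := funext fun t => by
  show zetaP L (u + (t + 1)) = zetaP L (u + 1 + t)
  rw [show u + (t + 1) = u + 1 + t from by ring]

lemma nuP_stationary (L Q : ℕ) (hper : ∀ s, zetaP L (s + Q) = zetaP L s) :
    Stationary (nuP L Q) := by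
  classical
  refine Measure.ext fun s hs => ?_
  rw [Measure.map_apply measurable_shift_s19 hs, nuP_apply L Q (measurable_shift_s19 hs),
    nuP_apply L Q hs]
  congr 1
  have hcnt : ((range Q).filter fun u => orb L u ∈ shift ⁻¹' s).card
      = ((range Q).filter fun u => orb L u ∈ s).card := by
    calc ((range Q).filter fun u => orb L u ∈ shift ⁻¹' s).card
        = ∑ u ∈ range Q, if orb L (1 + u) ∈ s then 1 else 0 := by
          rw [Finset.card_filter]
          refine Finset.sum_congr rfl fun u _ => ?_
          simp only [Set.mem_preimage, shift_orb L u, Nat.add_comm u 1]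
      _ = ∑ u ∈ range Q, if orb L u ∈ s then 1 else 0 :=
          shift_sum (fun i => if orb L i ∈ s then 1 else 0) Q
            (fun i => by simp only [orb_per L Q hper i]) 1
      _ = _ := (Finset.card_filter _ _).symm
  exact_mod_cast congrArg (Nat.cast (R := ℝ≥0∞)) hcnt

end Aux

section Aux2
open Finset

lemma measurable_freqWord {k : ℕ} (B : Fin k → Bool × Bool) (n : ℕ) :
    Measurable fun x : ℕ → Bool × Bool => freqWord B n x := by
  classical
  unfold freqWord
  by_cases h : k ≤ n
  · simp only [if_pos h]
    apply Measurable.div_const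
    apply Finset.measurable_sum
    intro i _
    have hms : MeasurableSet {x : ℕ → Bool × Bool | ∀ j : Fin k, x (i + j) = B j} := by
      have heq : {x : ℕ → Bool × Bool | ∀ j : Fin k, x (i + j) = B j}
          = ⋂ j : Fin k, (fun x : ℕ → Bool × Bool => x (i + j)) ⁻¹' {B j} := by
        ext x; simp [Set.mem_iInter]
      rw [heq]
      exact MeasurableSet.iInter fun j => (measurable_pi_apply _) (measurableSet_singleton _)
    exact Measurable.ite hms measurable_const measurable_const
  · simp only [if_neg h]; exact measurable_const

lemma measurableSet_tendsto_freq {k : ℕ} (B : Fin k → Bool × Bool) (c : ℝ) :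
    MeasurableSet {x : ℕ → Bool × Bool | Tendsto (fun n => freqWord B n x) atTop (𝓝 c)} := by
  have hset : {x : ℕ → Bool × Bool | Tendsto (fun n => freqWord B n x) atTop (𝓝 c)} =
      ⋂ q : ℕ, ⋃ N : ℕ, ⋂ n : ℕ, ⋂ _ : N ≤ n, {x | |freqWord B n x - c| < 1/(q+1)} := by
    ext x
    simp only [Set.mem_setOf_eq, Set.mem_iInter, Set.mem_iUnion]
    constructor
    · intro h q
      have hq : (0:ℝ) < 1/(q+1) := by positivity
      obtain ⟨N, hN⟩ := (Metric.tendsto_atTop.mp h) (1/(q+1)) hq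
      exact ⟨N, fun n hn => by have := hN n hn; rwa [Real.dist_eq] at this⟩
    · intro h
      rw [Metric.tendsto_atTop]
      intro ε hε
      obtain ⟨q, hq⟩ := exists_nat_one_div_lt hε
      obtain ⟨N, hN⟩ := h q
      exact ⟨N, fun n hn => by rw [Real.dist_eq]; exact lt_trans (hN n hn) hq⟩
  rw [hset]
  refine MeasurableSet.iInter fun q => MeasurableSet.iUnion fun N =>
    MeasurableSet.iInter fun n => MeasurableSet.iInter fun _ => ?_
  have hmf : Measurable fun x => |freqWord B n x - c| :=
    ((measurable_freqWord B n).sub measurable_const).abs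
  exact measurableSet_lt hmf measurable_const

lemma freqWord_eq_card {k : ℕ} (B : Fin k → Bool × Bool) (x : ℕ → Bool × Bool)
    {n : ℕ} (hn : k ≤ n) [DecidablePred fun i => ∀ j : Fin k, x (i + j) = B j] :
    freqWord B n x =
      ((((range (n - k + 1)).filter fun i => ∀ j : Fin k, x (i + j) = B j).card : ℕ) : ℝ)
        / ((n - k + 1 : ℕ) : ℝ) := by
  unfold freqWord
  rw [if_pos hn]
  congr 1
  · rw [Finset.card_filter, Nat.cast_sum]
    exact Finset.sum_congr rfl fun i _ => by split_ifs <;> simp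
  · have hof : ((n - k + 1 : ℕ) : ℝ) = (n:ℝ) - k + 1 := by
      push_cast [Nat.cast_sub hn]; ring
    rw [hof]

lemma nuP_ergodic (L Q : ℕ) (hQ : 0 < Q) (hper : ∀ s, zetaP L (s + Q) = zetaP L s) :
    ErgodicProc (nuP L Q) := by
  classical
  intro k B
  rcases Nat.eq_zero_or_pos k with hk | hk
  · subst hk
    refine ⟨1, Filter.Eventually.of_forall fun x => ?_⟩
    have hval : ∀ n : ℕ, freqWord B n x = 1 := by
      intro n
      unfold freqWord
      rw [if_pos (Nat.zero_le n)]
      have hpos : (n:ℝ) + 1 ≠ 0 := by positivity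
      rw [Finset.sum_congr rfl (fun i _ => if_pos (fun j => Fin.elim0 j))]
      rw [Finset.sum_const, Finset.card_range]
      simp only [Nat.sub_zero, nsmul_eq_mul, mul_one, Nat.cast_zero]
      rw [show (n:ℝ) - 0 + 1 = (n:ℝ) + 1 from by ring,
        show ((n + 1 : ℕ) : ℝ) = (n:ℝ) + 1 from by push_cast; ring]
      exact div_self hpos
    exact tendsto_const_nhds.congr fun n => (hval n).symm
  · set P0 : ℕ → Prop := fun m => ∀ j : Fin k, zetaP L (m + j) = B j with hP0def
    have hP0 : ∀ m, P0 (m + Q) ↔ P0 m := by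
      intro m
      constructor
      · intro h j
        have := h j
        rwa [show m + Q + (j:ℕ) = (m + (j:ℕ)) + Q from by ring, hper] at this
      · intro h j
        have := h j
        rw [show m + Q + (j:ℕ) = (m + (j:ℕ)) + Q from by ring, hper]
        exact this
    set c : ℝ := (((range Q).filter P0).card : ℝ) / Q with hcdef
    refine ⟨c, ?_⟩
    have hatom : ∀ u, Tendsto (fun n => freqWord B n (orb L u)) atTop (𝓝 c) := by
      intro u
      have hconst : ((range Q).filter fun i => P0 (u + i)).card = ((range Q).filter P0).card := by
        rw [Finset.card_filter, Finset.card_filter]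
        exact shift_sum (fun i => if P0 i then 1 else 0) Q
          (fun i => by simp only [hP0 i]) u
      have hper2 : ∀ i, (P0 (u + (i + Q))) ↔ P0 (u + i) := fun i => by
        rw [show u + (i + Q) = (u + i) + Q from by ring]; exact hP0 (u + i)
      have hco := periodic_freq_tendsto (fun i => P0 (u + i)) Q hQ hper2
      rw [hconst] at hco
      have hN : Tendsto (fun n : ℕ => n - k + 1) atTop atTop :=
        Filter.tendsto_atTop.mpr fun b => Filter.eventually_atTop.mpr ⟨b + k, fun n hn => by omega⟩
      have hcomp := hco.comp hN
      refine hcomp.congr' ?_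
      filter_upwards [Filter.eventually_ge_atTop k] with n hn
      have hpred : ∀ i, ((∀ j : Fin k, orb L u (i + j) = B j) ↔ P0 (u + i)) := by
        intro i
        constructor
        · intro h j
          have hh : zetaP L (u + (i + (j:ℕ))) = B j := h j
          rwa [show u + (i + (j:ℕ)) = u + i + (j:ℕ) from by ring] at hh
        · intro h j
          have hh := h j
          show zetaP L (u + (i + (j:ℕ))) = B j
          rwa [show u + (i + (j:ℕ)) = u + i + (j:ℕ) from by ring]
      have hfc := freqWord_eq_card B (orb L u) hn
      rw [Function.comp_apply, hfc]
      congr 2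
      · exact (Finset.filter_congr fun i _ => (hpred i)).symm ▸ rfl
    rw [MeasureTheory.ae_iff]
    have hT := measurableSet_tendsto_freq B c
    have hcompl : {x : ℕ → Bool × Bool | ¬ Tendsto (fun n => freqWord B n x) atTop (𝓝 c)}
        = {x : ℕ → Bool × Bool | Tendsto (fun n => freqWord B n x) atTop (𝓝 c)}ᶜ := rfl
    rw [hcompl, nuP_apply L Q hT.compl]
    rw [Finset.filter_false_of_mem (fun u _ => by
      simp only [Set.mem_compl_iff, Set.mem_setOf_eq, not_not]
      exact hatom u)]
    simp

end Aux2

section Aux3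
open Finset

lemma measSet_fst {t : ℕ} (T : Set (Fin t → Bool)) :
    MeasurableSet {z : ℕ → Bool × Bool | (fun i : Fin t => (z i).1) ∈ T} := by
  have hT : MeasurableSet T := (Set.to_countable T).measurableSet
  have hm : Measurable fun z : ℕ → Bool × Bool => (fun i : Fin t => (z (i:ℕ)).1) :=
    measurable_pi_lambda _ fun i => (measurable_pi_apply ((i:ℕ))).fst
  exact hm hT

lemma measSet_snd {t : ℕ} (T : Set (Fin t → Bool)) :
    MeasurableSet {z : ℕ → Bool × Bool | (fun i : Fin t => (z i).2) ∈ T} := by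
  have hT : MeasurableSet T := (Set.to_countable T).measurableSet
  have hm : Measurable fun z : ℕ → Bool × Bool => (fun i : Fin t => (z (i:ℕ)).2) :=
    measurable_pi_lambda _ fun i => (measurable_pi_apply ((i:ℕ))).snd
  exact hm hT

lemma nuP_indep (L : ℕ) (hL : 0 < L) (cop : Nat.Coprime 3 L) :
    IndepCoords (nuP L (3 * L)) := by
  classical
  intro t T1 T2
  set E1 : Set (ℕ → Bool × Bool) := {z | (fun i : Fin t => (z i).1) ∈ T1} with hE1
  set E2 : Set (ℕ → Bool × Bool) := {z | (fun i : Fin t => (z i).2) ∈ T2} with hE2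
  have hm1 : MeasurableSet E1 := measSet_fst T1
  have hm2 : MeasurableSet E2 := measSet_snd T2
  set P1 : ℕ → Prop := fun a => (fun i : Fin t => decide ((a + (i:ℕ)) % 3 = 2)) ∈ T1 with hP1
  set P2 : ℕ → Prop := fun b => (fun i : Fin t => decide (6 ≤ ((b + (i:ℕ)) % L) % 9)) ∈ T2 with hP2
  have hfun1 : ∀ u : ℕ, (fun i : Fin t => (orb L u (i:ℕ)).1)
      = (fun i : Fin t => decide (((u % 3) + (i:ℕ)) % 3 = 2)) := by
    intro u; funext i
    show decide ((u + (i:ℕ)) % 3 = 2) = decide (((u % 3) + (i:ℕ)) % 3 = 2)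
    rw [Nat.mod_add_mod]
  have hfun2 : ∀ u : ℕ, (fun i : Fin t => (orb L u (i:ℕ)).2)
      = (fun i : Fin t => decide (6 ≤ (((u % L) + (i:ℕ)) % L) % 9)) := by
    intro u; funext i
    show decide (6 ≤ ((u + (i:ℕ)) % L) % 9) = decide (6 ≤ (((u % L) + (i:ℕ)) % L) % 9)
    rw [Nat.mod_add_mod]
  have hch1 : ∀ u : ℕ, (orb L u ∈ E1) ↔ P1 (u % 3) := by
    intro u
    rw [hE1, Set.mem_setOf_eq, hfun1 u]
  have hch2 : ∀ u : ℕ, (orb L u ∈ E2) ↔ P2 (u % L) := by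
    intro u
    rw [hE2, Set.mem_setOf_eq, hfun2 u]
  have hE12 : {z : ℕ → Bool × Bool |
      (fun i : Fin t => (z i).1) ∈ T1 ∧ (fun i : Fin t => (z i).2) ∈ T2} = E1 ∩ E2 := rfl
  rw [hE12, nuP_apply _ _ (hm1.inter hm2), nuP_apply _ _ hm1, nuP_apply _ _ hm2]
  have hcnt12 : ((range (3*L)).filter fun u => orb L u ∈ E1 ∩ E2).card
      = ((range 3).filter P1).card * ((range L).filter P2).card := by
    have heq : ((range (3*L)).filter fun u => orb L u ∈ E1 ∩ E2)
        = ((range (3*L)).filter fun u => P1 (u % 3) ∧ P2 (u % L)) :=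
      Finset.filter_congr fun u _ => by
        rw [Set.mem_inter_iff]; exact and_congr (hch1 u) (hch2 u)
    rw [heq, crt_count L hL cop P1 P2]
  have hcnt1 : ((range (3*L)).filter fun u => orb L u ∈ E1).card
      = ((range 3).filter P1).card * L := by
    have heq : ((range (3*L)).filter fun u => orb L u ∈ E1)
        = ((range (3*L)).filter fun u => P1 (u % 3) ∧ (fun _ : ℕ => True) (u % L)) :=
      Finset.filter_congr fun u _ => by simp only [and_true]; exact hch1 u


    rw [heq, crt_count L hL cop P1 (fun _ => True)]
    congr 1
    rw [Finset.filter_true_of_mem (fun _ _ => trivial), Finset.card_range]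
  have hcnt2 : ((range (3*L)).filter fun u => orb L u ∈ E2).card
      = 3 * ((range L).filter P2).card := by
    have heq : ((range (3*L)).filter fun u => orb L u ∈ E2)
        = ((range (3*L)).filter fun u => (fun _ : ℕ => True) (u % 3) ∧ P2 (u % L)) :=
      Finset.filter_congr fun u _ => by simp only [true_and]; exact hch2 u
    rw [heq, crt_count L hL cop (fun _ => True) P2]
    congr 1
  rw [hcnt12, hcnt1, hcnt2]
  push_cast
  set X := (((range 3).filter P1).card : ℝ≥0∞)
  set Y := (((range L).filter P2).card : ℝ≥0∞)
  have hne : (3:ℝ≥0∞) * (L:ℕ) ≠ 0 :=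
    mul_ne_zero (by norm_num) (Nat.cast_ne_zero.mpr hL.ne')
  have htop : (3:ℝ≥0∞) * (L:ℕ) ≠ ⊤ :=
    ENNReal.mul_ne_top (by norm_num) (ENNReal.natCast_ne_top L)
  have key : ((3:ℝ≥0∞) * (L:ℕ))⁻¹ * ((L:ℝ≥0∞) * 3) = 1 := by
    rw [show ((L:ℝ≥0∞) * 3) = (3:ℝ≥0∞) * (L:ℕ) from by ring]
    exact ENNReal.inv_mul_cancel hne htop
  have expand : (((3:ℝ≥0∞) * (L:ℕ))⁻¹ * (X * (L:ℝ≥0∞))) * (((3:ℝ≥0∞) * (L:ℕ))⁻¹ * (3 * Y))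
      = (((3:ℝ≥0∞) * (L:ℕ))⁻¹ * (X * Y)) * ((((3:ℝ≥0∞) * (L:ℕ)))⁻¹ * ((L:ℝ≥0∞) * 3)) := by
    ring
  rw [expand, key, mul_one]

lemma zeta9_per : ∀ s, zetaP 9 (s + 9) = zetaP 9 s := by
  intro s
  unfold zetaP
  have e1 : (s + 9) % 3 = s % 3 := by omega
  have e2 : (s + 9) % 9 = s % 9 := by omega
  rw [e1, e2]

lemma rho_not_indep : ¬ IndepCoords (nuP 9 9) := by
  classical
  intro h
  have hkey := h 2 {v : Fin 2 → Bool | v 0 = true ∧ v 1 = false}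
                 {v : Fin 2 → Bool | v 0 = false ∧ v 1 = true}
  have hm1 := measSet_fst (t := 2) {v : Fin 2 → Bool | v 0 = true ∧ v 1 = false}
  have hm2 := measSet_snd (t := 2) {v : Fin 2 → Bool | v 0 = false ∧ v 1 = true}
  rw [show {z : ℕ → Bool × Bool |
        (fun i : Fin 2 => (z i).1) ∈ {v : Fin 2 → Bool | v 0 = true ∧ v 1 = false} ∧
        (fun i : Fin 2 => (z i).2) ∈ {v : Fin 2 → Bool | v 0 = false ∧ v 1 = true}}
      = ({z : ℕ → Bool × Bool | (fun i : Fin 2 => (z i).1) ∈ {v : Fin 2 → Bool | v 0 = true ∧ v 1 = false}}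
        ∩ {z : ℕ → Bool × Bool | (fun i : Fin 2 => (z i).2) ∈ {v : Fin 2 → Bool | v 0 = false ∧ v 1 = true}}) from rfl,
    nuP_apply _ _ (hm1.inter hm2), nuP_apply _ _ hm1, nuP_apply _ _ hm2] at hkey
  have hiffJ : ∀ u : ℕ, (orb 9 u ∈
      ({z : ℕ → Bool × Bool | (fun i : Fin 2 => (z i).1) ∈ {v : Fin 2 → Bool | v 0 = true ∧ v 1 = false}}
        ∩ {z : ℕ → Bool × Bool | (fun i : Fin 2 => (z i).2) ∈ {v : Fin 2 → Bool | v 0 = false ∧ v 1 = true}}))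
      ↔ ((u % 3 = 2 ∧ ¬((u+1) % 3 = 2)) ∧ (¬(6 ≤ u % 9 % 9) ∧ 6 ≤ (u+1) % 9 % 9)) := by
    intro u
    simp [Set.mem_inter_iff, Set.mem_setOf_eq, orb, zetaP]
  have hiff1 : ∀ u : ℕ, (orb 9 u ∈
      {z : ℕ → Bool × Bool | (fun i : Fin 2 => (z i).1) ∈ {v : Fin 2 → Bool | v 0 = true ∧ v 1 = false}})
      ↔ (u % 3 = 2 ∧ ¬((u+1) % 3 = 2)) := by
    intro u
    simp [Set.mem_setOf_eq, orb, zetaP]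
  have hiff2 : ∀ u : ℕ, (orb 9 u ∈
      {z : ℕ → Bool × Bool | (fun i : Fin 2 => (z i).2) ∈ {v : Fin 2 → Bool | v 0 = false ∧ v 1 = true}})
      ↔ (¬(6 ≤ u % 9 % 9) ∧ 6 ≤ (u+1) % 9 % 9) := by
    intro u
    simp [Set.mem_setOf_eq, orb, zetaP]
  rw [Finset.filter_congr (fun u _ => hiffJ u), Finset.filter_congr (fun u _ => hiff1 u),
    Finset.filter_congr (fun u _ => hiff2 u)] at hkey
  have hcJ : ((range 9).filter fun u =>
      ((u % 3 = 2 ∧ ¬((u+1) % 3 = 2)) ∧ (¬(6 ≤ u % 9 % 9) ∧ 6 ≤ (u+1) % 9 % 9))).card = 1 := by decide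
  have hc1 : ((range 9).filter fun u => (u % 3 = 2 ∧ ¬((u+1) % 3 = 2))).card = 3 := by decide
  have hc2 : ((range 9).filter fun u => (¬(6 ≤ u % 9 % 9) ∧ 6 ≤ (u+1) % 9 % 9)).card = 1 := by decide
  rw [hcJ, hc1, hc2] at hkey
  have := congrArg ENNReal.toReal hkey
  simp [ENNReal.toReal_mul, ENNReal.toReal_inv] at this
  norm_num at this

lemma prefix_match (K φ i t : ℕ) (hφ : φ < 9) (hi : i < 2*K) (ht : t < 9*K) :
    orb (27*K+1) (φ + 9*i) t = orb 9 φ t := by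
  show zetaP (27*K+1) (φ + 9*i + t) = zetaP 9 (φ + t)
  unfold zetaP
  have h3 : (φ + 9*i + t) % 3 = (φ + t) % 3 := by omega
  have hlt : φ + 9*i + t < 27*K + 1 := by omega
  have h9 : (φ + 9*i + t) % (27*K+1) % 9 = (φ + t) % 9 % 9 := by
    rw [Nat.mod_eq_of_lt hlt]; omega
  rw [h3, h9]

end Aux3


/-- no asymmetric test for independence. Let `I` be the set of all
stationary ergodic process distributions on pairs of binary sequences under which the two
coordinate processes are independent. There is no asymmetrically consistent test for `I`
against its complement `E ∖ I`. -/
theorem no_asymmetric_independence_test :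
    ¬ ∃ ψ : ℝ → ℕ → (ℕ → Bool × Bool) → Bool,
        (∀ α n, Measurable (ψ α n)) ∧ (∀ α, FinHorizon (ψ α)) ∧
        AsymConsistent ψ
          {ρ | StatErg ρ ∧ IndepCoords ρ}
          (ergSet (Bool × Bool) \ {ρ | StatErg ρ ∧ IndepCoords ρ}) := by
  classical
  rintro ⟨ψ, hmeas, hfin, hcons⟩
  set aa : ℝ := 1/40 with haa
  have haaIoo : aa ∈ Set.Ioo (0:ℝ) 1 := by
    constructor <;> norm_num [haa]
  have hρprob : IsProbabilityMeasure (nuP 9 9) := nuP_prob 9 9 (by norm_num)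
  have hρstat : Stationary (nuP 9 9) := nuP_stationary 9 9 zeta9_per
  have hρerg : ErgodicProc (nuP 9 9) := nuP_ergodic 9 9 (by norm_num) zeta9_per
  have hρmem : nuP 9 9 ∈ ergSet (Bool × Bool) \ {ρ | StatErg ρ ∧ IndepCoords ρ} := by
    constructor
    · exact ⟨hρprob, hρstat, hρerg⟩
    · intro hmem
      exact rho_not_indep hmem.2
  have hae := hcons.2 aa haaIoo (nuP 9 9) hρmem
  set C : ℕ → Set (ℕ → Bool × Bool) := fun m => {x | ψ aa m x = true} with hC
  have hCmeas : ∀ m, MeasurableSet (C m) := by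
    intro m
    have h := (hmeas aa m) (measurableSet_singleton true)
    have heq : C m = ψ aa m ⁻¹' {true} := by
      ext x; simp [hC, Set.mem_preimage]
    rw [heq]; exact h
  set As : ℕ → Set (ℕ → Bool × Bool) := fun N => ⋂ m, ⋂ (_ : N ≤ m), C m with hAs
  have hAmeas : ∀ N, MeasurableSet (As N) :=
    fun N => MeasurableSet.iInter fun m => MeasurableSet.iInter fun _ => hCmeas m
  have hmono : Monotone As := by
    intro N M hNM x hx
    simp only [hAs, Set.mem_iInter] at hx ⊢
    exact fun m hm => hx m (hNM.trans hm)
  have hUnionMeas : MeasurableSet (⋃ N, As N) := MeasurableSet.iUnion hAmeas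
  have hev : ∀ᵐ x ∂(nuP 9 9), x ∈ ⋃ N, As N := by
    filter_upwards [hae] with x hx
    obtain ⟨N, hN⟩ := Filter.eventually_atTop.mp hx
    exact Set.mem_iUnion.mpr ⟨N, Set.mem_iInter.mpr fun m =>
      Set.mem_iInter.mpr fun hm => hN m hm⟩
  haveI := hρprob
  have h1 : nuP 9 9 (⋃ N, As N) = 1 := by
    have hc : nuP 9 9 (⋃ N, As N)ᶜ = 0 := MeasureTheory.ae_iff.mp hev
    exact (MeasureTheory.prob_compl_eq_zero_iff hUnionMeas).mp hc
  have h2 : (2:ℝ≥0∞)⁻¹ < ⨆ N, nuP 9 9 (As N) := by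
    rw [← hmono.measure_iUnion, h1]
    exact ENNReal.inv_lt_one.mpr (by norm_num)
  obtain ⟨N0, hN0⟩ := lt_iSup_iff.mp h2
  set K := N0 + 1 with hK
  set L := 27 * K + 1 with hLdef
  set n := 9 * K with hn
  have hKpos : 0 < K := by omega
  have hLpos : 0 < L := by omega
  have hcop : Nat.Coprime 3 L := by
    refine (Nat.prime_three.coprime_iff_not_dvd).mpr ?_
    rintro ⟨c, hc⟩
    omega
  have hperL : ∀ s, zetaP L (s + 3*L) = zetaP L s := by
    intro s
    unfold zetaP
    have e1 : (s + 3*L) % 3 = s % 3 := by omega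
    have e2 : (s + 3*L) % L = s % L := by
      rw [show s + 3*L = s + L*3 from by ring, Nat.add_mul_mod_self_left]
    rw [e1, e2]
  have hμmem : nuP L (3*L) ∈ {ρ | StatErg ρ ∧ IndepCoords ρ} :=
    ⟨⟨nuP_prob _ _ (by omega), nuP_stationary _ _ hperL, nuP_ergodic _ _ (by omega) hperL⟩,
      nuP_indep L hLpos hcop⟩
  have htypeI : nuP L (3*L) (C n) ≤ ENNReal.ofReal aa := hcons.1 aa haaIoo n _ hμmem
  have hρval : nuP 9 9 (C n) = (((9:ℕ) : ℝ≥0∞))⁻¹ *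
      ((((Finset.range 9).filter fun u => orb 9 u ∈ C n).card : ℕ) : ℝ≥0∞) :=
    nuP_apply 9 9 (hCmeas n)
  have hμval : nuP L (3*L) (C n) = (((3*L:ℕ) : ℝ≥0∞))⁻¹ *
      ((((Finset.range (3*L)).filter fun u => orb L u ∈ C n).card : ℕ) : ℝ≥0∞) :=
    nuP_apply L (3*L) (hCmeas n)
  set S9 := ((Finset.range 9).filter fun u => orb 9 u ∈ C n).card with hS9def
  set Sm := ((Finset.range (3*L)).filter fun u => orb L u ∈ C n).card with hSmdef
  -- the injection (φ, i) ↦ φ + 9 i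
  have hinj : S9 * (2*K) ≤ Sm := by
    have hle := Finset.card_le_card_of_injOn (f := fun p : ℕ × ℕ => p.1 + 9 * p.2)
      (s := ((Finset.range 9).filter fun u => orb 9 u ∈ C n) ×ˢ Finset.range (2*K))
      (t := (Finset.range (3*L)).filter fun u => orb L u ∈ C n) ?_ ?_
    · rwa [Finset.card_product, Finset.card_range] at hle
    · intro p hp
      simp only [Finset.mem_coe, Finset.mem_product, Finset.mem_filter, Finset.mem_range] at hp
      obtain ⟨⟨hφ9, hPρ⟩, hi⟩ := hp
      simp only [Finset.mem_coe, Finset.mem_filter, Finset.mem_range]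
      refine ⟨by omega, ?_⟩
      have hpre : ∀ t', t' < n → orb L (p.1 + 9*p.2) t' = orb 9 p.1 t' := by
        intro t' ht'
        rw [hLdef]
        exact prefix_match K p.1 p.2 t' hφ9 hi (by omega)
      have heqψ := hfin aa n (orb L (p.1 + 9*p.2)) (orb 9 p.1) hpre
      show ψ aa n (orb L (p.1 + 9*p.2)) = true
      have hPρ' : ψ aa n (orb 9 p.1) = true := hPρ
      rw [heqψ]; exact hPρ'
    · intro p hp q hq hpq
      simp only [Finset.coe_product, Set.mem_prod, Finset.mem_coe, Finset.mem_filter,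
        Finset.mem_range] at hp hq
      have hp1 : p.1 < 9 := hp.1.1
      have hq1 : q.1 < 9 := hq.1.1
      have : p.1 + 9 * p.2 = q.1 + 9 * q.2 := hpq
      have h1 : p.1 = q.1 := by omega
      have h2 : p.2 = q.2 := by omega
      exact Prod.ext h1 h2
  -- extract 40 * Sm ≤ 3 L from the type I bound
  have hne : ((3*L:ℕ) : ℝ≥0∞) ≠ 0 := Nat.cast_ne_zero.mpr (by omega)
  have htop : ((3*L:ℕ) : ℝ≥0∞) ≠ ⊤ := ENNReal.natCast_ne_top _
  have hμ' : ((Sm:ℕ) : ℝ≥0∞) = ((3*L:ℕ) : ℝ≥0∞) * nuP L (3*L) (C n) := by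
    rw [hμval, ← mul_assoc, ENNReal.mul_inv_cancel hne htop, one_mul]
  have hle1 : ((Sm:ℕ) : ℝ≥0∞) ≤ ((3*L:ℕ) : ℝ≥0∞) * ENNReal.ofReal aa := by
    rw [hμ']; exact mul_le_mul_right htypeI _
  have hofa : ENNReal.ofReal aa = (40:ℝ≥0∞)⁻¹ := by
    rw [haa, one_div, ENNReal.ofReal_inv_of_pos (by norm_num)]
    norm_num
  have h40 : ((40 * Sm : ℕ) : ℝ≥0∞) ≤ ((3*L : ℕ) : ℝ≥0∞) := by
    have e1 : ((40 * Sm : ℕ) : ℝ≥0∞) = (40:ℝ≥0∞) * ((Sm:ℕ) : ℝ≥0∞) := by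
      push_cast; ring
    rw [e1]
    calc (40:ℝ≥0∞) * ((Sm:ℕ) : ℝ≥0∞)
        ≤ (40:ℝ≥0∞) * (((3*L:ℕ) : ℝ≥0∞) * ENNReal.ofReal aa) := mul_le_mul_right hle1 _
      _ = ((3*L:ℕ) : ℝ≥0∞) * ((40:ℝ≥0∞) * ENNReal.ofReal aa) := by ring
      _ = ((3*L:ℕ) : ℝ≥0∞) * 1 := by
          rw [hofa, ENNReal.mul_inv_cancel (by norm_num) (by norm_num)]
      _ = ((3*L:ℕ) : ℝ≥0∞) := mul_one _
  have hSm40 : 40 * Sm ≤ 3 * L := by exact_mod_cast h40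
  have hS9le : S9 ≤ 1 := by
    by_contra hgt
    push_neg at hgt
    have h2S : 2 * (2*K) ≤ S9 * (2*K) := Nat.mul_le_mul_right _ (by omega)
    omega
  have hρle : nuP 9 9 (C n) ≤ (2:ℝ≥0∞)⁻¹ := by
    rw [hρval]
    calc (((9:ℕ):ℝ≥0∞))⁻¹ * ((S9 : ℕ) : ℝ≥0∞)
        ≤ (((9:ℕ):ℝ≥0∞))⁻¹ * 1 := by
          apply mul_le_mul_right
          exact_mod_cast hS9le
      _ = (((9:ℕ):ℝ≥0∞))⁻¹ := mul_one _
      _ ≤ (2:ℝ≥0∞)⁻¹ := by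
          apply ENNReal.inv_le_inv.mpr
          norm_num
  have hsub : As N0 ⊆ C n := by
    intro x hx
    simp only [hAs, Set.mem_iInter] at hx
    exact hx n (by omega)
  have hlt2 : (2:ℝ≥0∞)⁻¹ < nuP 9 9 (C n) := lt_of_lt_of_le hN0 (measure_mono hsub)
  exact absurd (lt_of_lt_of_le hlt2 hρle) (lt_irrefl _)


end Paper
end
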